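/- For a connected weighted graph on K nodes with all weights positive, as γ → ∞ the minimizer θ(γ) of Σ_k (θ_k - b_k)² + γ Σ_{l>k} W_{kl}(θ_k - θ_l)² converges to the constant vector with all entries equal to the mean (1/K)Σ_k b_k. -/

import Mathlib

open Finset

/-- Graph Laplacian of a symmetric nonnegative weight matrix with zero diagonal. -/
noncomputable def graphLaplacian {K : ℕ} (W : Matrix (Fin K) (Fin K) ℝ) :
    Matrix (Fin K) (Fin K) ℝ :=
  Matrix.diagonal (fun k => ∑ m, W k m) - W

/-
Let `P` be the averaging matrix, the orthogonal projection onto the constant vectors. Row and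
column sums of the Laplacian `L` vanish, so `L * P = P * L = 0`. By connectivity the kernel of
`L` consists of the constant vectors only, so `L + P` is invertible. For `γ > 0` these relations
give the explicit inverse `(1 + γ • L)⁻¹ = (γ⁻¹ • 1 + L + P)⁻¹ * (γ⁻¹ • 1 + P)`, which by
continuity of matrix inversion tends to `(L + P)⁻¹ * P = P` as `γ → ∞`; and `P *ᵥ b` is the
constant vector of means.
-/

open Matrix Filter Topology

noncomputable def averagingMatrix (n : Type*) [Fintype n] : Matrix n n ℝ :=
  of fun _ _ => (Fintype.card n : ℝ)⁻¹

section averagingMatrix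
variable {m n : Type*} [Fintype n]

theorem averagingMatrix_mulVec (x : n → ℝ) :
    averagingMatrix n *ᵥ x = fun _ => (∑ i, x i) / Fintype.card n := by
  ext i
  simp [averagingMatrix, mulVec, dotProduct, ← Finset.mul_sum, div_eq_inv_mul]

theorem averagingMatrix_mulVec_const [Nonempty n] (c : ℝ) :
    averagingMatrix n *ᵥ (fun _ => c) = fun _ => c := by
  rw [averagingMatrix_mulVec]
  simp [Finset.card_univ]

theorem averagingMatrix_mul_self : averagingMatrix n * averagingMatrix n = averagingMatrix n := by
  ext i j
  have : (Fintype.card n : ℝ) ≠ 0 := Nat.cast_ne_zero.mpr (Fintype.card_pos_iff.mpr ⟨i⟩).ne'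
  simp only [averagingMatrix, mul_apply, of_apply, Finset.sum_const, Finset.card_univ,
    nsmul_eq_mul]
  field_simp

theorem mul_averagingMatrix_eq_zero {A : Matrix m n ℝ} (hA : ∀ i, ∑ j, A i j = 0) :
    A * averagingMatrix n = 0 := by
  ext i j
  simp [averagingMatrix, mul_apply, ← Finset.sum_mul, hA]

theorem averagingMatrix_mul_eq_zero [Fintype m] {A : Matrix n m ℝ} (hA : ∀ j, ∑ i, A i j = 0) :
    averagingMatrix n * A = 0 := by
  ext i j
  simp [averagingMatrix, mul_apply, ← Finset.mul_sum, hA]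

end averagingMatrix

section resolvent

variable {n : Type*} [Fintype n] [DecidableEq n]

theorem inv_one_add_smul_eq {L P : Matrix n n ℝ} (hP : P * P = P) (hPL : P * L = 0)
    {γ : ℝ} (hγ : 0 < γ) (hN : IsUnit (γ⁻¹ • 1 + L + P)) :
    (1 + γ • L)⁻¹ = (γ⁻¹ • 1 + L + P)⁻¹ * (γ⁻¹ • 1 + P) := by
  set N := γ⁻¹ • 1 + L + P
  have hNdet : IsUnit N.det := (isUnit_iff_isUnit_det N).mp hN
  have hc : γ⁻¹ + 1 ≠ 0 := by positivity
  have hPN : P * N⁻¹ = (γ⁻¹ + 1)⁻¹ • P := by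
    have hPN' : P * N = (γ⁻¹ + 1) • P := by
      simp only [N, mul_add, hP, hPL, Matrix.mul_smul, mul_one]; module
    calc P * N⁻¹ = ((γ⁻¹ + 1)⁻¹ • (P * N)) * N⁻¹ := by
          rw [hPN', smul_smul, inv_mul_cancel₀ hc, one_smul]
      _ = (γ⁻¹ + 1)⁻¹ • P := by rw [Matrix.smul_mul, mul_nonsing_inv_cancel_right _ _ hNdet]
  apply inv_eq_right_inv
  calc (1 + γ • L) * (N⁻¹ * (γ⁻¹ • 1 + P)) = γ • ((N - P) * N⁻¹ * (γ⁻¹ • 1 + P)) := by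
        simp only [N, add_sub_cancel_right, smul_add, smul_smul, mul_inv_cancel₀ hγ.ne', one_smul,
          ← Matrix.smul_mul, mul_assoc]
    _ = γ • ((1 - (γ⁻¹ + 1)⁻¹ • P) * (γ⁻¹ • 1 + P)) := by
        rw [sub_mul, mul_nonsing_inv N hNdet, hPN]
    _ = 1 := by
        simp only [sub_mul, mul_add, Matrix.smul_mul, Matrix.mul_smul, hP, one_mul, mul_one]
        match_scalars
        · field_simp
        · field_simp; ring

theorem tendsto_inv_one_add_smul_atTop {L P : Matrix n n ℝ} (hP : P * P = P) (hLP : L * P = 0)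
    (hPL : P * L = 0) (hLP_isUnit : IsUnit (L + P)) :
    Tendsto (fun γ : ℝ => (1 + γ • L)⁻¹) atTop (𝓝 P) := by
  set N : ℝ → Matrix n n ℝ := fun t => t • 1 + L + P
  have hN : Continuous N := by fun_prop
  have hN0 : N 0 = L + P := by simp [N]
  have hdet : (N 0).det ≠ 0 := by rw [hN0]; exact ((isUnit_iff_isUnit_det _).mp hLP_isUnit).ne_zero
  have hunit : ∀ᶠ t in 𝓝 0, IsUnit (N t) := by
    filter_upwards [(hN.matrix_det.continuousAt (x := 0)).eventually_ne hdet] with t ht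
    exact (isUnit_iff_isUnit_det _).mpr (isUnit_iff_ne_zero.mpr ht)
  have hlim : Tendsto (fun t => (N t)⁻¹ * (t • 1 + P)) (𝓝 0) (𝓝 P) := by
    have hinv : ContinuousAt (fun t => (N t)⁻¹) 0 :=
      (continuousAt_matrix_inv _
        (by simpa [Ring.inverse_eq_inv'] using continuousAt_inv₀ hdet)).comp hN.continuousAt
    have hMP : (L + P) * P = P := by rw [add_mul, hLP, hP, zero_add]
    have hP' : (L + P)⁻¹ * P = P := by
      have := nonsing_inv_mul_cancel_left (L + P) P ((isUnit_iff_isUnit_det _).mp hLP_isUnit)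
      rwa [hMP] at this
    convert hinv.tendsto.mul
      ((by fun_prop : Continuous fun t : ℝ => t • (1 : Matrix n n ℝ) + P).tendsto 0) using 2
    rw [zero_smul, zero_add, hN0, hP']
  have hinv0 : Tendsto (fun γ : ℝ => γ⁻¹) atTop (𝓝 0) := tendsto_inv_atTop_zero
  refine (hlim.comp hinv0).congr' ?_
  filter_upwards [hinv0.eventually hunit, eventually_gt_atTop 0] with γ hγu hγ
  exact (inv_one_add_smul_eq hP hPL hγ hγu).symm

end resolvent

section graphLaplacian
variable {K : ℕ} {W : Matrix (Fin K) (Fin K) ℝ}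

theorem graphLaplacian_mulVec_apply (x : Fin K → ℝ) (k : Fin K) :
    (graphLaplacian W *ᵥ x) k = ∑ l, W k l * (x k - x l) := by
  rw [graphLaplacian, sub_mulVec, Pi.sub_apply, mulVec_diagonal, Finset.sum_mul, mulVec,
    dotProduct, ← Finset.sum_sub_distrib]
  simp only [mul_sub]

theorem sum_graphLaplacian_apply_right (k : Fin K) : ∑ l, graphLaplacian W k l = 0 := by
  simp [graphLaplacian, diagonal_apply, Finset.sum_sub_distrib]

theorem sum_graphLaplacian_apply_left (hW : W.IsSymm) (l : Fin K) :
    ∑ k, graphLaplacian W k l = 0 := by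
  simp [graphLaplacian, diagonal_apply, Finset.sum_sub_distrib, hW.apply]

theorem two_mul_dotProduct_graphLaplacian_mulVec (hW : W.IsSymm) (x : Fin K → ℝ) :
    2 * (x ⬝ᵥ graphLaplacian W *ᵥ x) = ∑ k, ∑ l, W k l * (x k - x l) ^ 2 := by
  have hx : x ⬝ᵥ graphLaplacian W *ᵥ x = ∑ k, ∑ l, W k l * (x k * (x k - x l)) := by
    simp only [dotProduct, graphLaplacian_mulVec_apply, Finset.mul_sum]
    exact Finset.sum_congr rfl fun k _ => Finset.sum_congr rfl fun l _ => by ring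
  have hswap : ∑ k, ∑ l, W k l * (x k * (x k - x l)) =
      ∑ k, ∑ l, W k l * (x l * (x l - x k)) := by
    rw [Finset.sum_comm]
    simp only [hW.apply]
  rw [two_mul, hx]
  nth_rewrite 2 [hswap]
  simp only [← Finset.sum_add_distrib]
  exact Finset.sum_congr rfl fun k _ => Finset.sum_congr rfl fun l _ => by ring

theorem apply_eq_of_graphLaplacian_mulVec_eq_zero (hW : W.IsSymm) (hWnn : ∀ k l, 0 ≤ W k l)
    (hconn : (SimpleGraph.fromRel fun k l : Fin K => 0 < W k l).Connected) {x : Fin K → ℝ}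
    (hx : graphLaplacian W *ᵥ x = 0) (k l : Fin K) : x k = x l := by
  have hterm_nonneg : ∀ i j, 0 ≤ W i j * (x i - x j) ^ 2 :=
    fun i j => mul_nonneg (hWnn i j) (sq_nonneg _)
  have hsum : ∑ i, ∑ j, W i j * (x i - x j) ^ 2 = 0 := by
    rw [← two_mul_dotProduct_graphLaplacian_mulVec hW, hx, dotProduct_zero, mul_zero]
  have hedge : ∀ i j, 0 < W i j → x i = x j := by
    intro i j hij
    have hrows :=
      (Fintype.sum_eq_zero_iff_of_nonneg fun i => Fintype.sum_nonneg (hterm_nonneg i)).mp hsum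
    have hrow := (Fintype.sum_eq_zero_iff_of_nonneg (hterm_nonneg i)).mp (congrFun hrows i)
    simpa [hij.ne', sub_eq_zero] using congrFun hrow j
  obtain ⟨p⟩ := hconn.preconnected k l
  induction p with
  | nil => rfl
  | cons hadj _ ih =>
    rcases (SimpleGraph.fromRel_adj _ _ _ |>.mp hadj).2 with h | h
    · exact (hedge _ _ h).trans ih
    · exact (hedge _ _ h).symm.trans ih

theorem isUnit_graphLaplacian_add_averagingMatrix (hW : W.IsSymm) (hWnn : ∀ k l, 0 ≤ W k l)
    (hconn : (SimpleGraph.fromRel fun k l : Fin K => 0 < W k l).Connected) :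
    IsUnit (graphLaplacian W + averagingMatrix (Fin K)) := by
  rw [isUnit_iff_isUnit_det, isUnit_iff_ne_zero, Ne, ← exists_mulVec_eq_zero_iff]
  rintro ⟨x, hx0, hx⟩
  have hPx : averagingMatrix (Fin K) *ᵥ x = 0 := by
    calc averagingMatrix (Fin K) *ᵥ x
        = (averagingMatrix (Fin K) * (graphLaplacian W + averagingMatrix (Fin K))) *ᵥ x := by
          rw [mul_add, averagingMatrix_mul_eq_zero (sum_graphLaplacian_apply_left hW),
            averagingMatrix_mul_self, zero_add]
      _ = 0 := by rw [← mulVec_mulVec, hx, mulVec_zero]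
  have hLx : graphLaplacian W *ᵥ x = 0 := by rwa [add_mulVec, hPx, add_zero] at hx
  refine hx0 (funext fun k => ?_)
  have hconst : x = fun _ => x k :=
    funext fun l => apply_eq_of_graphLaplacian_mulVec_eq_zero hW hWnn hconn hLx l k
  have : Nonempty (Fin K) := ⟨k⟩
  have hPxk := congrFun hPx k
  rwa [hconst, averagingMatrix_mulVec_const] at hPxk

end graphLaplacian

theorem fused_minimizer_tendsto_mean_general {K : ℕ}
    (b : Fin K → ℝ) (W : Matrix (Fin K) (Fin K) ℝ)
    (hW : W.IsSymm) (hWnn : ∀ k l, 0 ≤ W k l)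
    (hconn : (SimpleGraph.fromRel fun k l : Fin K => 0 < W k l).Connected) :
    Filter.Tendsto
      (fun gam : ℝ =>
        (((1 : Matrix (Fin K) (Fin K) ℝ) + gam • graphLaplacian W)⁻¹).mulVec b)
      Filter.atTop
      (nhds fun _ : Fin K => (∑ k, b k) / K) := by
  have hlim := tendsto_inv_one_add_smul_atTop averagingMatrix_mul_self
    (mul_averagingMatrix_eq_zero sum_graphLaplacian_apply_right)
    (averagingMatrix_mul_eq_zero (sum_graphLaplacian_apply_left hW))
    (isUnit_graphLaplacian_add_averagingMatrix hW hWnn hconn)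
  have hb := ((continuous_id.matrix_mulVec (continuous_const (y := b))).tendsto _).comp hlim
  simpa [averagingMatrix_mulVec, Function.comp_def] using hb

theorem fused_minimizer_tendsto_mean {K : ℕ} (hK : 0 < K)
    (b : Fin K → ℝ) (W : Matrix (Fin K) (Fin K) ℝ)
    (hW : W.IsSymm) (hWnn : ∀ k l, 0 ≤ W k l) (hWdiag : ∀ k, W k k = 0)
    (hconn : (SimpleGraph.fromRel fun k l : Fin K => 0 < W k l).Connected) :
    Filter.Tendsto
      (fun gam : ℝ =>
        (((1 : Matrix (Fin K) (Fin K) ℝ) + gam • graphLaplacian W)⁻¹).mulVec b)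
      Filter.atTop
      (nhds fun _ : Fin K => (∑ k, b k) / K) :=
  fused_minimizer_tendsto_mean_general b W hW hWnn hconn
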